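/- Let Ω = {u ∈ ℝ³ : u₁, u₂, u₃ > 0 and √u₁, √u₂, √u₃ satisfy the strict triangle inequalities}. For u ∈ Ω and α ∈ {1,2,3}, let W_α(u) = cot θ_α, where θ_α is the angle opposite the side of length d_α = √(2 u_α) in the Euclidean triangle with side lengths d₁, d₂, d₃. Then for distinct α, β with third index γ, ∂W_α/∂u_β (u) = (2R²/A) · cos θ_γ/(d_α d_β), where A is the area of the triangle and R = d_α/(2 sin θ_α) is its circumradius. -/

import Mathlib

/-- The edge length `d_α = √(2 u_α)` determined by the variable `u_α = d_α²/2`. -/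
noncomputable def triEdge (u : Fin 3 → ℝ) (α : Fin 3) : ℝ :=
  Real.sqrt (2 * u α)

/-- The angle opposite the side `d_α`, by the law of cosines. -/
noncomputable def triAngle (u : Fin 3 → ℝ) (α : Fin 3) : ℝ :=
  Real.arccos ((triEdge u (α + 1) ^ 2 + triEdge u (α + 2) ^ 2 - triEdge u α ^ 2) /
    (2 * triEdge u (α + 1) * triEdge u (α + 2)))

/-- The cotangent edge weight `W_α(u) = cot θ_α`. -/
noncomputable def triWeight (α : Fin 3) (u : Fin 3 → ℝ) : ℝ :=
  Real.cot (triAngle u α)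

/-- The area of the triangle, `A = (1/2) d_β d_γ sin θ_α` (computed with `α = 0`). -/
noncomputable def triArea (u : Fin 3 → ℝ) : ℝ :=
  (1 / 2) * triEdge u 1 * triEdge u 2 * Real.sin (triAngle u 0)

/-- The circumradius of the triangle, `R = d_α / (2 sin θ_α)` (computed with `α = 0`). -/
noncomputable def triCircumradius (u : Fin 3 → ℝ) : ℝ :=
  triEdge u 0 / (2 * Real.sin (triAngle u 0))

/-- The admissible metric space: `u_α > 0` and `√u₁, √u₂, √u₃` satisfy the strict
triangle inequalities. -/
def triOmega : Set (Fin 3 → ℝ) :=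
  {u | (∀ α, 0 < u α) ∧
    ∀ α, Real.sqrt (u α) < Real.sqrt (u (α + 1)) + Real.sqrt (u (α + 2))}

/-!
On `triOmega` the law of cosines gives `cos θ_α` and `sin θ_α` with the common denominator
`d_β d_γ`, and `(d_β d_γ)² - (u_β + u_γ - u_α)² = H`, where `H = 2 Σ u_β u_γ - Σ u_α² = 4 A²`
is Heron's polynomial. Hence `W_α = (u_β + u_γ - u_α) / √H` is an explicit function of
`(u_α, u_β, u_γ)`, whose partial derivative in `u_β` is `2 u_γ (u_α + u_β - u_γ) / H^{3/2}`.
With `A = √H / 2`, `R = d_γ / (2 sin θ_γ)` and `cos θ_γ = (u_α + u_β - u_γ) / (d_α d_β)` this is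
the claimed expression.
-/

open Real Filter Topology

theorem sin_arccos_div {p : ℝ} (hp : 0 < p) (s : ℝ) :
    sin (arccos (s / p)) = √(p ^ 2 - s ^ 2) / p := by
  rw [sin_arccos, div_pow, one_sub_div (by positivity), sqrt_div' _ (by positivity), sqrt_sq hp.le]

theorem cos_arccos_div {p s : ℝ} (hp : 0 < p) (h : s ^ 2 ≤ p ^ 2) :
    cos (arccos (s / p)) = s / p := by
  obtain ⟨h₁, h₂⟩ := abs_le_of_sq_le_sq' h hp.le
  exact cos_arccos ((le_div_iff₀ hp).2 (by linarith)) ((div_le_one hp).2 h₂)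

theorem fderiv_apply_single_eq_deriv_update {ι 𝕜 F : Type*} [Fintype ι] [DecidableEq ι]
    [NontriviallyNormedField 𝕜] [NormedAddCommGroup F] [NormedSpace 𝕜 F]
    {f : (ι → 𝕜) → F} {u : ι → 𝕜} (hf : DifferentiableAt 𝕜 f u) (i : ι) :
    fderiv 𝕜 f u (Pi.single i 1) = deriv (fun t => f (Function.update u i t)) (u i) := by
  rw [← Function.update_eq_self i u] at hf
  have h := hf.hasFDerivAt.comp_hasDerivAt (u i) (hasDerivAt_update u i (u i))
  rw [Function.update_eq_self] at h
  exact h.deriv.symm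

/-- Heron's formula: `heron a b c` is `16 · area²` of the triangle with sides `√a, √b, √c`. -/
noncomputable def heron (a b c : ℝ) : ℝ := 2 * (a * b + b * c + c * a) - (a ^ 2 + b ^ 2 + c ^ 2)

theorem heron_eq (a b c : ℝ) : heron a b c = 4 * b * c - (b + c - a) ^ 2 := by
  unfold heron; ring

theorem heron_sq (x y z : ℝ) :
    heron (x ^ 2) (y ^ 2) (z ^ 2) = (x + y + z) * (y + z - x) * (z + x - y) * (x + y - z) := by
  unfold heron; ring

theorem heron_sq_pos {x y z : ℝ} (hx : x < y + z) (hy : y < z + x) (hz : z < x + y) :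
    0 < heron (x ^ 2) (y ^ 2) (z ^ 2) := by
  rw [heron_sq]
  have : 0 < x + y + z := by linarith
  have := sub_pos.2 hx; have := sub_pos.2 hy; have := sub_pos.2 hz
  positivity

/-- The cotangent of the angle opposite `√a` in the triangle with sides `√a, √b, √c`
(or, by homogeneity, `√(2a), √(2b), √(2c)`). -/
noncomputable def cotOpposite (a b c : ℝ) : ℝ := (b + c - a) / √(heron a b c)

theorem cotOpposite_comm (a b c : ℝ) : cotOpposite a b c = cotOpposite a c b := by
  unfold cotOpposite heron; ring_nf

theorem hasDerivAt_cotOpposite {a b c : ℝ} (h : 0 < heron a b c) :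
    HasDerivAt (fun t => cotOpposite a t c)
      (2 * c * (a + b - c) / (heron a b c * √(heron a b c))) b := by
  have hN : HasDerivAt (fun t => t + c - a) 1 b := ((hasDerivAt_id' b).add_const c).sub_const a
  have hH : HasDerivAt (fun t => heron a t c) (2 * (a + c - b)) b := by
    simp_rw [heron_eq]
    exact (((hasDerivAt_id' b).const_mul 4).mul_const c |>.sub (hN.pow 2)).congr_deriv
      (by norm_num; ring)
  have hs := sqrt_pos.2 h
  refine (hN.div (hH.sqrt h.ne') hs.ne').congr_deriv ?_
  field_simp
  rw [sq_sqrt h.le, heron_eq]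
  ring

theorem Fin.add_one_add_two_cases {α β γ : Fin 3} (hαβ : α ≠ β) (hγα : γ ≠ α) (hγβ : γ ≠ β) :
    (α + 1 = β ∧ α + 2 = γ) ∨ (α + 1 = γ ∧ α + 2 = β) := by
  revert α β γ; decide

theorem heron_rotate (f : Fin 3 → ℝ) (α : Fin 3) :
    heron (f α) (f (α + 1)) (f (α + 2)) = heron (f 0) (f 1) (f 2) := by
  unfold heron; fin_cases α <;> simp only [Fin.reduceFinMk, Fin.isValue, Fin.reduceAdd] <;> ring

theorem heron_apply_of_ne (f : Fin 3 → ℝ) {α β γ : Fin 3} (hαβ : α ≠ β) (hγα : γ ≠ α)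
    (hγβ : γ ≠ β) : heron (f α) (f β) (f γ) = heron (f 0) (f 1) (f 2) := by
  rw [← heron_rotate f α]
  rcases Fin.add_one_add_two_cases hαβ hγα hγβ with ⟨rfl, rfl⟩ | ⟨rfl, rfl⟩
  · rfl
  · unfold heron; ring

theorem isOpen_triOmega : IsOpen triOmega := by
  have hs : ∀ α : Fin 3, Continuous fun u : Fin 3 → ℝ => √(u α) :=
    fun α => (continuous_apply α).sqrt
  simp only [triOmega, Set.ofPred_and, Set.ofPred_forall]
  exact (isOpen_iInter_of_finite fun α => isOpen_lt continuous_const (continuous_apply α)).inter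
    (isOpen_iInter_of_finite fun α => isOpen_lt (hs α) ((hs _).add (hs _)))

theorem heron_pos_of_mem_triOmega {u : Fin 3 → ℝ} (hu : u ∈ triOmega) :
    0 < heron (u 0) (u 1) (u 2) := by
  obtain ⟨hpos, htri⟩ := hu
  have hsq : ∀ i, √(u i) ^ 2 = u i := fun i => sq_sqrt (hpos i).le
  rw [← hsq 0, ← hsq 1, ← hsq 2]
  exact heron_sq_pos (htri 0) (htri 1) (htri 2)

section Triangle

variable {u : Fin 3 → ℝ}

theorem triEdge_sq {α : Fin 3} (h : 0 ≤ u α) : triEdge u α ^ 2 = 2 * u α :=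
  sq_sqrt (by linarith)

theorem triEdge_pos {α : Fin 3} (h : 0 < u α) : 0 < triEdge u α :=
  sqrt_pos.2 (by linarith)

theorem triAngle_eq_arccos (hu : ∀ i, 0 ≤ u i) (α : Fin 3) :
    triAngle u α = arccos ((u (α + 1) + u (α + 2) - u α) /
      (triEdge u (α + 1) * triEdge u (α + 2))) := by
  rw [triAngle, triEdge_sq (hu _), triEdge_sq (hu _), triEdge_sq (hu _)]
  congr 1
  ring

theorem sq_triEdge_mul_sub_sq (hu : ∀ i, 0 ≤ u i) (α : Fin 3) :
    (triEdge u (α + 1) * triEdge u (α + 2)) ^ 2 - (u (α + 1) + u (α + 2) - u α) ^ 2 =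
      heron (u α) (u (α + 1)) (u (α + 2)) := by
  rw [mul_pow, triEdge_sq (hu _), triEdge_sq (hu _), heron_eq]
  ring

theorem cos_triAngle (hu : u ∈ triOmega) (α : Fin 3) :
    cos (triAngle u α) =
      (u (α + 1) + u (α + 2) - u α) / (triEdge u (α + 1) * triEdge u (α + 2)) := by
  have hnn : ∀ i, 0 ≤ u i := fun i => (hu.1 i).le
  rw [triAngle_eq_arccos hnn,
    cos_arccos_div (mul_pos (triEdge_pos (hu.1 _)) (triEdge_pos (hu.1 _)))]
  have := sq_triEdge_mul_sub_sq hnn α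
  have := heron_rotate u α
  have := heron_pos_of_mem_triOmega hu
  linarith

theorem sin_triAngle (hu : ∀ i, 0 < u i) (α : Fin 3) :
    sin (triAngle u α) =
      √(heron (u α) (u (α + 1)) (u (α + 2))) / (triEdge u (α + 1) * triEdge u (α + 2)) := by
  have hnn : ∀ i, 0 ≤ u i := fun i => (hu i).le
  rw [triAngle_eq_arccos hnn, sin_arccos_div (mul_pos (triEdge_pos (hu _)) (triEdge_pos (hu _))),
    sq_triEdge_mul_sub_sq hnn]

theorem triWeight_eq_cotOpposite (hu : u ∈ triOmega) {α β γ : Fin 3} (hαβ : α ≠ β)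
    (hγα : γ ≠ α) (hγβ : γ ≠ β) : triWeight α u = cotOpposite (u α) (u β) (u γ) := by
  have hcyc : triWeight α u = cotOpposite (u α) (u (α + 1)) (u (α + 2)) := by
    rw [triWeight, cot_eq_cos_div_sin, cos_triAngle hu, sin_triAngle hu.1,
      div_div_div_cancel_right₀ (mul_pos (triEdge_pos (hu.1 _)) (triEdge_pos (hu.1 _))).ne',
      cotOpposite]
  rcases Fin.add_one_add_two_cases hαβ hγα hγβ with ⟨rfl, rfl⟩ | ⟨rfl, rfl⟩
  · exact hcyc
  · rw [hcyc, cotOpposite_comm]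

theorem triArea_eq (hu : ∀ i, 0 < u i) : triArea u = √(heron (u 0) (u 1) (u 2)) / 2 := by
  have := triEdge_pos (hu 1); have := triEdge_pos (hu 2)
  rw [triArea, sin_triAngle hu 0, zero_add, zero_add]
  field_simp

theorem triCircumradius_eq (hu : ∀ i, 0 < u i) (γ : Fin 3) :
    triCircumradius u = triEdge u γ / (2 * sin (triAngle u γ)) := by
  have hd : ∀ i, 0 < triEdge u i := fun i => triEdge_pos (hu i)
  rw [triCircumradius, sin_triAngle hu, sin_triAngle hu, heron_rotate, heron_rotate]
  have := hd 0; have := hd 1; have := hd 2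
  field_simp
  fin_cases γ <;> simp only [Fin.reduceFinMk, Fin.isValue, Fin.reduceAdd] <;> ring

end Triangle

theorem fderiv_triWeight_apply_single {u : Fin 3 → ℝ} (hu : u ∈ triOmega) {α β γ : Fin 3}
    (hαβ : α ≠ β) (hγα : γ ≠ α) (hγβ : γ ≠ β) :
    fderiv ℝ (triWeight α) u (Pi.single β 1) =
      2 * u γ * (u α + u β - u γ) /
        (heron (u α) (u β) (u γ) * √(heron (u α) (u β) (u γ))) := by
  have hH : 0 < heron (u α) (u β) (u γ) :=
    heron_apply_of_ne u hαβ hγα hγβ ▸ heron_pos_of_mem_triOmega hu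
  have hW : triWeight α =ᶠ[𝓝 u] fun v => cotOpposite (v α) (v β) (v γ) :=
    eventually_of_mem (isOpen_triOmega.mem_nhds hu) fun v hv =>
      triWeight_eq_cotOpposite hv hαβ hγα hγβ
  have hdiff : DifferentiableAt ℝ (fun v : Fin 3 → ℝ => cotOpposite (v α) (v β) (v γ)) u := by
    have hQ : DifferentiableAt ℝ (fun v : Fin 3 → ℝ => heron (v α) (v β) (v γ)) u := by
      unfold heron; fun_prop
    simp only [cotOpposite, div_eq_mul_inv]
    exact (by fun_prop : DifferentiableAt ℝ (fun v : Fin 3 → ℝ => v β + v γ - v α) u).mul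
      ((hQ.sqrt hH.ne').inv (sqrt_pos.2 hH).ne')
  have hline : (fun t => cotOpposite (Function.update u β t α) (Function.update u β t β)
      (Function.update u β t γ)) = fun t => cotOpposite (u α) t (u γ) := by
    funext t
    rw [Function.update_of_ne hαβ, Function.update_self, Function.update_of_ne hγβ]
  rw [hW.fderiv_eq, fderiv_apply_single_eq_deriv_update hdiff, hline,
    (hasDerivAt_cotOpposite hH).deriv]

/-- For distinct indices `α, β` with third index `γ`,
`∂W_α/∂u_β = (2R²/A) · cos θ_γ/(d_α d_β)`, where `A` is the area and `R` the
circumradius of the triangle. -/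
theorem cot_weight_partial_formula (u : Fin 3 → ℝ) (hu : u ∈ triOmega)
    (α β γ : Fin 3) (hαβ : α ≠ β) (hγα : γ ≠ α) (hγβ : γ ≠ β) :
    fderiv ℝ (triWeight α) u (Pi.single β 1) =
      (2 * triCircumradius u ^ 2 / triArea u) *
        Real.cos (triAngle u γ) / (triEdge u α * triEdge u β) := by
  rw [fderiv_triWeight_apply_single hu hαβ hγα hγβ, triCircumradius_eq hu.1 γ, triArea_eq hu.1,
    cos_triAngle hu γ, sin_triAngle hu.1 γ, heron_rotate, heron_apply_of_ne u hαβ hγα hγβ]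
  have hH := heron_pos_of_mem_triOmega hu
  have hdα := triEdge_pos (hu.1 α)
  have hdβ := triEdge_pos (hu.1 β)
  have hsH := sqrt_pos.2 hH
  rcases Fin.add_one_add_two_cases hγα hγβ.symm hαβ.symm with ⟨h₁, h₂⟩ | ⟨h₁, h₂⟩ <;>
    rw [h₁, h₂] <;> field_simp <;> rw [sq_sqrt hH.le, triEdge_sq (hu.1 γ).le] <;> ring
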